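/- arXiv:1008.1977 — 8 statements merged into one kernel-verified Lean document; each statement's English description precedes it below -/
import Mathlib

section
/- Let L be a length function on a finite set X satisfying Kraft's inequality, and let G_L be a bijection onto {1,...,|X|} that guesses in increasing order of L-lengths. Then for every x, \log_2 G_L(x) \le L(x), equivalently G_L(x) \le 2^{L(x)}. -/
/-- If `L` satisfies Kraft's inequality and `G_L` guesses in increasing order of
`L`-lengths, then `log₂ G_L(x) ≤ L(x)`, equivalently `G_L(x) ≤ 2^{L(x)}`. -/
theorem guess_by_length_bound {α : Type*} [Fintype α] [Nonempty α]
    (L : α → ℕ) (hKraft : ∑ x, (2 : ℝ) ^ (-(L x : ℤ)) ≤ 1)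
    (G : α → ℕ) (hGinj : Function.Injective G)
    (hGrange : ∀ x, 1 ≤ G x ∧ G x ≤ Fintype.card α)
    (hinc : ∀ a b, G a ≤ G b → L a ≤ L b) :
    ∀ x, Real.logb 2 (G x) ≤ (L x : ℝ) ∧ (G x : ℝ) ≤ (2 : ℝ) ^ (L x) := by
  intro x
  -- image of G is Icc 1 (card α)
  have himg : Finset.univ.image G = Finset.Icc 1 (Fintype.card α) := by
    apply Finset.eq_of_subset_of_card_le
    · intro n hn
      simp only [Finset.mem_image, Finset.mem_univ, true_and] at hn
      obtain ⟨a, rfl⟩ := hn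
      exact Finset.mem_Icc.2 (hGrange a)
    · rw [Nat.card_Icc, Finset.card_image_of_injective _ hGinj, Finset.card_univ]
      simp
  set S := Finset.univ.filter (fun a => G a ≤ G x) with hS
  have hcard : S.card = G x := by
    have h1 : S.image G = Finset.Icc 1 (G x) := by
      ext n
      simp only [hS, Finset.mem_image, Finset.mem_filter, Finset.mem_univ, true_and,
        Finset.mem_Icc]
      constructor
      · rintro ⟨a, ha, rfl⟩; exact ⟨(hGrange a).1, ha⟩
      · rintro ⟨h1, h2⟩
        have : n ∈ Finset.univ.image G := by
          rw [himg]; exact Finset.mem_Icc.2 ⟨h1, le_trans h2 (hGrange x).2⟩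
        obtain ⟨a, -, rfl⟩ := Finset.mem_image.1 this
        exact ⟨a, h2, rfl⟩
    have h2 : (S.image G).card = S.card :=
      Finset.card_image_of_injective _ hGinj
    rw [h1] at h2
    simpa using h2.symm
  have hpos : (0:ℝ) < (2:ℝ) ^ (-(L x : ℤ)) := by positivity
  have hsum : (G x : ℝ) * (2:ℝ) ^ (-(L x : ℤ)) ≤ 1 := by
    calc (G x : ℝ) * (2:ℝ) ^ (-(L x : ℤ))
        = ∑ _a ∈ S, (2:ℝ) ^ (-(L x : ℤ)) := by
          rw [Finset.sum_const, hcard, nsmul_eq_mul]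
      _ ≤ ∑ a ∈ S, (2:ℝ) ^ (-(L a : ℤ)) := by
          apply Finset.sum_le_sum
          intro a ha
          have hLa : L a ≤ L x := hinc a x (Finset.mem_filter.1 ha).2
          apply zpow_le_zpow_right₀ (by norm_num)
          omega
      _ ≤ ∑ a, (2:ℝ) ^ (-(L a : ℤ)) := by
          apply Finset.sum_le_sum_of_subset_of_nonneg (Finset.filter_subset _ _)
          intro a _ _; positivity
      _ ≤ 1 := hKraft
  have hmain : (G x : ℝ) ≤ (2:ℝ) ^ (L x) := by
    have h2 : (2:ℝ) ^ (-(L x : ℤ)) = ((2:ℝ) ^ (L x))⁻¹ := by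
      rw [zpow_neg, zpow_natCast]
    rw [h2] at hsum
    have hp : (0:ℝ) < (2:ℝ) ^ (L x) := by positivity
    calc (G x : ℝ) = (G x : ℝ) * ((2:ℝ) ^ (L x))⁻¹ * (2:ℝ) ^ (L x) := by
          field_simp
      _ ≤ 1 * (2:ℝ) ^ (L x) := by
          apply mul_le_mul_of_nonneg_right hsum hp.le
      _ = (2:ℝ) ^ (L x) := one_mul _
  refine ⟨?_, hmain⟩
  have hGpos : (0:ℝ) < (G x : ℝ) := by
    exact_mod_cast (hGrange x).1
  calc Real.logb 2 (G x) ≤ Real.logb 2 ((2:ℝ) ^ (L x)) :=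
        Real.logb_le_logb_of_le (by norm_num) hGpos hmain
    _ = (L x : ℝ) := by
        rw [← Real.rpow_natCast, Real.logb_rpow (by norm_num) (by norm_num)]
end

section
/- Let P be a pmf on a finite set X, \rho > 0, L a length function satisfying Kraft's inequality, G_L its associated guessing function (increasing order of L-lengths), G^* an optimal guessing function (decreasing order of P-probabilities), L^* a length function minimizing E[2^{\rho L(X)}], and c = \sum_{i=1}^{|X|} 1/i. Then E[G_L(X)^\rho] / E[G^*(X)^\rho] \le (E[2^{\rho L(X)}] / E[2^{\rho L^*(X)}]) \cdot 2^{\rho(1+\log_2 c)}. -/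
/-!
Guessing in increasing order of `L` gives `G_L(x) ≤ #{y | L y ≤ L x} ≤ 2 ^ L(x)` by Kraft's
inequality, so `E[G_L^ρ] ≤ E[2^{ρL}]`. Conversely, since `G*` is a bijection onto `{1, …, n}`,
the weights `1 / (c G*(x))` sum to one, and the Shannon lengths `⌈log₂ (c G*(x))⌉` satisfy
Kraft's inequality with `2^{ρ L} ≤ (2c)^ρ G*^ρ`; optimality of `L*` gives
`E[2^{ρL*}] ≤ 2^{ρ(1 + log₂ c)} E[G*^ρ]`. Dividing the two bounds gives the claim.
-/

open Finset Function

section Kraft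

variable {α : Type*} [Fintype α]

theorem two_zpow_neg_natCast (n : ℕ) : (2 : ℝ) ^ (-(n : ℤ)) = (2 : ℝ) ^ (-(n : ℝ)) := by
  rw [← Real.rpow_intCast]
  push_cast
  rfl

theorem card_filter_le_le_two_pow {L : α → ℕ} (hKraft : ∑ x, (2 : ℝ) ^ (-(L x : ℤ)) ≤ 1)
    (x : α) : #{y | L y ≤ L x} ≤ 2 ^ L x := by
  have hcard : (#{y | L y ≤ L x} : ℝ) * (2 : ℝ) ^ (-(L x : ℤ)) ≤ 1 := by
    calc (#{y | L y ≤ L x} : ℝ) * (2 : ℝ) ^ (-(L x : ℤ))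
        ≤ ∑ y ∈ {y | L y ≤ L x}, (2 : ℝ) ^ (-(L y : ℤ)) := by
          rw [← nsmul_eq_mul]
          refine card_nsmul_le_sum _ _ _ fun y hy => zpow_le_zpow_right₀ one_le_two ?_
          simpa using (mem_filter.1 hy).2
      _ ≤ ∑ y, (2 : ℝ) ^ (-(L y : ℤ)) :=
          sum_le_sum_of_subset_of_nonneg (subset_univ _) fun y _ _ => by positivity
      _ ≤ 1 := hKraft
  rw [zpow_neg, zpow_natCast, ← div_eq_mul_inv, div_le_one (by positivity)] at hcard
  exact_mod_cast hcard

theorem kraft_ceil_neg_logb {q : α → ℝ} (hq : ∀ x, 0 < q x) (hsum : ∑ x, q x ≤ 1) :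
    ∑ x, (2 : ℝ) ^ (-(⌈-Real.logb 2 (q x)⌉₊ : ℤ)) ≤ 1 := by
  refine le_trans (sum_le_sum fun x _ => ?_) hsum
  rw [two_zpow_neg_natCast]
  calc (2 : ℝ) ^ (-(⌈-Real.logb 2 (q x)⌉₊ : ℝ)) ≤ (2 : ℝ) ^ Real.logb 2 (q x) :=
        Real.rpow_le_rpow_of_exponent_le one_le_two
          (by linarith [Nat.le_ceil (-Real.logb 2 (q x))])
    _ = q x := Real.rpow_logb two_pos (by norm_num) (hq x)

theorem two_rpow_mul_ceil_neg_logb_le {q ρ : ℝ} (hq0 : 0 < q) (hq1 : q ≤ 1) (hρ : 0 ≤ ρ) :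
    (2 : ℝ) ^ (ρ * ⌈-Real.logb 2 q⌉₊) ≤ (2 / q) ^ ρ := by
  have hceil : (⌈-Real.logb 2 q⌉₊ : ℝ) ≤ 1 - Real.logb 2 q := by
    linarith [Nat.ceil_lt_add_one (neg_nonneg.2 (Real.logb_nonpos one_lt_two hq0.le hq1))]
  calc (2 : ℝ) ^ (ρ * ⌈-Real.logb 2 q⌉₊) ≤ (2 : ℝ) ^ ((1 - Real.logb 2 q) * ρ) :=
        Real.rpow_le_rpow_of_exponent_le one_le_two (by nlinarith)
    _ = (2 / q) ^ ρ := by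
        rw [Real.rpow_mul zero_le_two, Real.rpow_sub two_pos, Real.rpow_one,
          Real.rpow_logb two_pos (by norm_num) hq0]

end Kraft

section Guessing

variable {α : Type*} [Fintype α] {G : α → ℕ} (hG : Injective G)
  (hGrange : ∀ x, 1 ≤ G x ∧ G x ≤ Fintype.card α)
include hG hGrange

theorem image_univ_eq_Icc : univ.image G = Icc 1 (Fintype.card α) := by
  refine eq_of_subset_of_card_le (fun i hi => ?_) ?_
  · obtain ⟨y, _, rfl⟩ := mem_image.1 hi
    exact mem_Icc.2 (hGrange y)
  · simp [card_image_of_injective _ hG]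

theorem sum_comp_eq_sum_Icc {M : Type*} [AddCommMonoid M] (f : ℕ → M) :
    ∑ x, f (G x) = ∑ i ∈ Icc 1 (Fintype.card α), f i := by
  classical
  rw [← image_univ_eq_Icc hG hGrange, sum_image fun x _ y _ h => hG h]

theorem le_card_filter_le {β : Type*} [LinearOrder β] {L : α → β}
    (hGL : ∀ a b, G a ≤ G b → L a ≤ L b) (x : α) : G x ≤ #{y | L y ≤ L x} := by
  classical
  have hsub : Icc 1 (G x) ⊆ ({y | L y ≤ L x} : Finset α).image G := by
    intro i hi
    have hi' : i ∈ univ.image G := by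
      rw [image_univ_eq_Icc hG hGrange]
      exact Icc_subset_Icc_right (hGrange x).2 hi
    obtain ⟨y, _, rfl⟩ := mem_image.1 hi'
    exact mem_image_of_mem G (mem_filter.2 ⟨mem_univ y, hGL y x (mem_Icc.1 hi).2⟩)
  simpa using (card_le_card hsub).trans card_image_le

theorem le_two_pow_of_kraft {L : α → ℕ} (hKraft : ∑ x, (2 : ℝ) ^ (-(L x : ℤ)) ≤ 1)
    (hGL : ∀ a b, G a ≤ G b → L a ≤ L b) (x : α) : G x ≤ 2 ^ L x :=
  (le_card_filter_le hG hGrange hGL x).trans (card_filter_le_le_two_pow hKraft x)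

end Guessing

theorem one_le_sum_Icc_one_div {n : ℕ} (hn : 1 ≤ n) : 1 ≤ ∑ i ∈ Icc 1 n, (1 : ℝ) / i := by
  simpa using single_le_sum (f := fun i : ℕ => (1 : ℝ) / i) (fun i _ => by positivity)
    (mem_Icc.2 ⟨le_rfl, hn⟩)

section Moments

variable {α : Type*} [Fintype α] {P : α → ℝ} (hP0 : ∀ x, 0 ≤ P x) {ρ : ℝ}
include hP0

theorem sum_mul_pos_iff {f : α → ℝ} (hf : ∀ x, 0 < f x) :
    0 < ∑ x, P x * f x ↔ ∃ x, 0 < P x := by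
  rw [sum_pos_iff_of_nonneg fun x _ => mul_nonneg (hP0 x) (hf x).le]
  simp [mul_pos_iff_of_pos_right (hf _)]

theorem sum_mul_rpow_le_sum_mul_two_rpow (hρ : 0 ≤ ρ) {L G : α → ℕ}
    (hKraft : ∑ x, (2 : ℝ) ^ (-(L x : ℤ)) ≤ 1) (hG : Injective G)
    (hGrange : ∀ x, 1 ≤ G x ∧ G x ≤ Fintype.card α) (hGL : ∀ a b, G a ≤ G b → L a ≤ L b) :
    ∑ x, P x * (G x : ℝ) ^ ρ ≤ ∑ x, P x * (2 : ℝ) ^ (ρ * (L x : ℝ)) := by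
  refine sum_le_sum fun x _ => mul_le_mul_of_nonneg_left ?_ (hP0 x)
  rw [mul_comm, Real.rpow_mul zero_le_two, Real.rpow_natCast]
  exact Real.rpow_le_rpow (Nat.cast_nonneg _)
    (by exact_mod_cast le_two_pow_of_kraft hG hGrange hKraft hGL x) hρ

/-- Compare `L*` with the Shannon lengths of the weights `1 / (c G(x))`. -/
theorem optimal_sum_mul_two_rpow_le [Nonempty α] (hρ : 0 ≤ ρ) {G Lstar : α → ℕ} (hG : Injective G)
    (hGrange : ∀ x, 1 ≤ G x ∧ G x ≤ Fintype.card α)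
    (hLstarOpt : ∀ L' : α → ℕ, (∑ x, (2 : ℝ) ^ (-(L' x : ℤ)) ≤ 1) →
      ∑ x, P x * (2 : ℝ) ^ (ρ * (Lstar x : ℝ)) ≤ ∑ x, P x * (2 : ℝ) ^ (ρ * (L' x : ℝ))) :
    ∑ x, P x * (2 : ℝ) ^ (ρ * (Lstar x : ℝ)) ≤
      (2 : ℝ) ^ (ρ * (1 + Real.logb 2 (∑ i ∈ Icc 1 (Fintype.card α), (1 : ℝ) / i))) *
        ∑ x, P x * (G x : ℝ) ^ ρ := by
  set c := ∑ i ∈ Icc 1 (Fintype.card α), (1 : ℝ) / i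
  have hc : 1 ≤ c := one_le_sum_Icc_one_div Fintype.card_pos
  have hcG : ∀ x, 1 ≤ c * G x := fun x =>
    one_le_mul_of_one_le_of_one_le hc (by exact_mod_cast (hGrange x).1)
  set q : α → ℝ := fun x => (c * G x)⁻¹
  have hq0 : ∀ x, 0 < q x := fun x => inv_pos.2 (one_pos.trans_le (hcG x))
  have hq1 : ∀ x, q x ≤ 1 := fun x => inv_le_one_of_one_le₀ (hcG x)
  have hqsum : ∑ x, q x = 1 := by
    simp only [q, mul_inv, ← mul_sum]
    rw [sum_comp_eq_sum_Icc hG hGrange fun i => (i : ℝ)⁻¹]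
    simp only [c, one_div]
    exact inv_mul_cancel₀ (by simpa [c] using (one_pos.trans_le hc).ne')
  have hK : (2 : ℝ) ^ (ρ * (1 + Real.logb 2 c)) = (2 * c) ^ ρ := by
    rw [mul_comm, Real.rpow_mul zero_le_two, Real.rpow_add two_pos, Real.rpow_one,
      Real.rpow_logb two_pos (by norm_num) (one_pos.trans_le hc)]
  calc ∑ x, P x * (2 : ℝ) ^ (ρ * (Lstar x : ℝ))
      ≤ ∑ x, P x * (2 : ℝ) ^ (ρ * (⌈-Real.logb 2 (q x)⌉₊ : ℝ)) :=
        hLstarOpt _ (kraft_ceil_neg_logb hq0 hqsum.le)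
    _ ≤ ∑ x, P x * (2 / q x) ^ ρ := sum_le_sum fun x _ =>
        mul_le_mul_of_nonneg_left (two_rpow_mul_ceil_neg_logb_le (hq0 x) (hq1 x) hρ) (hP0 x)
    _ = (2 : ℝ) ^ (ρ * (1 + Real.logb 2 c)) * ∑ x, P x * (G x : ℝ) ^ ρ := by
        rw [hK, mul_sum]
        refine sum_congr rfl fun x _ => ?_
        rw [div_inv_eq_mul, ← mul_assoc,
          Real.mul_rpow (by positivity) (Nat.cast_nonneg _)]
        ring

end Moments

theorem div_le_div_mul_of_le_of_le {a b c d k : ℝ} (hb : 0 < b) (hd : 0 < d) (hc : 0 ≤ c)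
    (hac : a ≤ c) (hdb : d ≤ k * b) : a / b ≤ c / d * k := by
  rw [div_mul_eq_mul_div, div_le_div_iff₀ hb hd]
  nlinarith [mul_le_mul_of_nonneg_right hac hd.le, mul_le_mul_of_nonneg_left hdb hc]

theorem guessing_ratio_upper_bound_general {α : Type*} [Fintype α]
    (P : α → ℝ) (hP0 : ∀ x, 0 ≤ P x)
    (ρ : ℝ) (hρ : 0 < ρ)
    -- `L` is a length function satisfying Kraft's inequality
    (L : α → ℕ) (hKraft : ∑ x, (2 : ℝ) ^ (-(L x : ℤ)) ≤ 1)
    -- `G_L` is the guessing function associated with `L` (increasing order of lengths)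
    (Gl : α → ℕ) (hGLinj : Function.Injective Gl)
    (hGLrange : ∀ x, 1 ≤ Gl x ∧ Gl x ≤ Fintype.card α)
    (hGLinc : ∀ a b, Gl a ≤ Gl b → L a ≤ L b)
    -- `Gstar` is an optimal guessing function (decreasing order of `P`-probabilities)
    (Gstar : α → ℕ) (hGsinj : Function.Injective Gstar)
    (hGsrange : ∀ x, 1 ≤ Gstar x ∧ Gstar x ≤ Fintype.card α)
    -- `Lstar` is a length function minimizing `E[2^{ρ L(X)}]`
    (Lstar : α → ℕ)
    (hLstarOpt : ∀ L' : α → ℕ, (∑ x, (2 : ℝ) ^ (-(L' x : ℤ)) ≤ 1) →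
      ∑ x, P x * (2 : ℝ) ^ (ρ * (Lstar x : ℝ)) ≤ ∑ x, P x * (2 : ℝ) ^ (ρ * (L' x : ℝ)))
    (c : ℝ) (hc : c = ∑ i ∈ Finset.Icc 1 (Fintype.card α), (1 : ℝ) / i) :
    (∑ x, P x * (Gl x : ℝ) ^ ρ) / (∑ x, P x * (Gstar x : ℝ) ^ ρ) ≤
      ((∑ x, P x * (2 : ℝ) ^ (ρ * (L x : ℝ))) /
        (∑ x, P x * (2 : ℝ) ^ (ρ * (Lstar x : ℝ)))) *
        (2 : ℝ) ^ (ρ * (1 + Real.logb 2 c)) := by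
  subst hc
  by_cases hP : ∃ x, 0 < P x
  · have : Nonempty α := let ⟨x, _⟩ := hP; ⟨x⟩
    have hGs : ∀ x, 0 < (Gstar x : ℝ) := fun x => by exact_mod_cast (hGsrange x).1
    exact div_le_div_mul_of_le_of_le
      ((sum_mul_pos_iff hP0 fun x => Real.rpow_pos_of_pos (hGs x) ρ).2 hP)
      ((sum_mul_pos_iff hP0 fun x => Real.rpow_pos_of_pos two_pos _).2 hP)
      (sum_nonneg fun x _ => mul_nonneg (hP0 x) (by positivity))
      (sum_mul_rpow_le_sum_mul_two_rpow hP0 hρ.le hKraft hGLinj hGLrange hGLinc)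
      (optimal_sum_mul_two_rpow_le hP0 hρ.le hGsinj hGsrange hLstarOpt)
  · have hP_eq : P = 0 := funext fun x => (hP0 x).antisymm' (not_lt.1 fun h => hP ⟨x, h⟩)
    simp [hP_eq]

/-- The ratio of guessing moments of the guessing function `G_L` associated with a length
function `L` to the optimal guessing moments is bounded by the corresponding ratio of
exponentiated-length moments times `2^{ρ(1 + log₂ c)}`. -/
theorem guessing_ratio_upper_bound {α : Type*} [Fintype α] [Nonempty α]
    (P : α → ℝ) (hP0 : ∀ x, 0 ≤ P x) (hP1 : ∑ x, P x = 1)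
    (ρ : ℝ) (hρ : 0 < ρ)
    -- `L` is a length function satisfying Kraft's inequality
    (L : α → ℕ) (hKraft : ∑ x, (2 : ℝ) ^ (-(L x : ℤ)) ≤ 1)
    -- `G_L` is the guessing function associated with `L` (increasing order of lengths)
    (Gl : α → ℕ) (hGLinj : Function.Injective Gl)
    (hGLrange : ∀ x, 1 ≤ Gl x ∧ Gl x ≤ Fintype.card α)
    (hGLinc : ∀ a b, Gl a ≤ Gl b → L a ≤ L b)
    -- `Gstar` is an optimal guessing function (decreasing order of `P`-probabilities)
    (Gstar : α → ℕ) (hGsinj : Function.Injective Gstar)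
    (hGsrange : ∀ x, 1 ≤ Gstar x ∧ Gstar x ≤ Fintype.card α)
    (hGsdec : ∀ a b, Gstar a ≤ Gstar b → P b ≤ P a)
    -- `Lstar` is a length function minimizing `E[2^{ρ L(X)}]`
    (Lstar : α → ℕ) (hKraftStar : ∑ x, (2 : ℝ) ^ (-(Lstar x : ℤ)) ≤ 1)
    (hLstarOpt : ∀ L' : α → ℕ, (∑ x, (2 : ℝ) ^ (-(L' x : ℤ)) ≤ 1) →
      ∑ x, P x * (2 : ℝ) ^ (ρ * (Lstar x : ℝ)) ≤ ∑ x, P x * (2 : ℝ) ^ (ρ * (L' x : ℝ)))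
    (c : ℝ) (hc : c = ∑ i ∈ Finset.Icc 1 (Fintype.card α), (1 : ℝ) / i) :
    (∑ x, P x * (Gl x : ℝ) ^ ρ) / (∑ x, P x * (Gstar x : ℝ) ^ ρ) ≤
      ((∑ x, P x * (2 : ℝ) ^ (ρ * (L x : ℝ))) /
        (∑ x, P x * (2 : ℝ) ^ (ρ * (Lstar x : ℝ)))) *
        (2 : ℝ) ^ (ρ * (1 + Real.logb 2 c)) :=
  guessing_ratio_upper_bound_general P hP0 ρ hρ L hKraft Gl hGLinj hGLrange hGLinc Gstar hGsinj
    hGsrange Lstar hLstarOpt c hc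
end

section
/- Let P be a pmf on a finite set X, \rho > 0, G^* the optimal guessing function and L^* the optimal length function for the exponential cost. Then |(1/\rho)\log_2 E[G^*(X)^\rho] - (1/\rho)\log_2 E[2^{\rho L^*(X)}]| \le 1 + \log_2 c, where c = \sum_{i=1}^{|X|} 1/i. -/
/-!
Listing the symbols in order of increasing optimal code length `L*` gives a guessing function
`G` with `G(x) ≤ 2^{L*(x)}`, since by Kraft's inequality at most `2^ℓ` symbols have length
at most `ℓ`; hence `E[G*^ρ] ≤ E[G^ρ] ≤ E[2^{ρ L*}]`. Conversely the lengths
`⌈log₂ (c G*(x))⌉` satisfy Kraft's inequality because `∑ₓ 1/G*(x) = c`, and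
`2^{⌈log₂ (c G*(x))⌉} ≤ 2c G*(x)`, hence `E[2^{ρ L*}] ≤ (2c)^ρ E[G*^ρ]`.
-/

open Finset

section Rank

variable {α β : Type*} [Fintype α] [LinearOrder β]

def rankBy (f : α → β) (x : α) : ℕ := #{y | f y ≤ f x}

theorem one_le_rankBy (f : α → β) (x : α) : 1 ≤ rankBy f x :=
  card_pos.mpr ⟨x, by simp⟩

theorem rankBy_le_card (f : α → β) (x : α) : rankBy f x ≤ Fintype.card α :=
  card_filter_le _ _

theorem rankBy_lt_rankBy {f : α → β} {x y : α} (h : f x < f y) : rankBy f x < rankBy f y := by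
  refine card_lt_card ⟨fun z hz => ?_, fun hsub => ?_⟩
  · simp only [mem_filter, mem_univ, true_and] at hz ⊢
    exact hz.trans h.le
  · have hy := hsub (by simp : y ∈ ({z | f z ≤ f y} : Finset α))
    simp only [mem_filter, mem_univ, true_and] at hy
    exact hy.not_gt h

theorem rankBy_injective {f : α → β} (hf : Function.Injective f) :
    Function.Injective (rankBy f) := by
  intro x y h
  by_contra hne
  rcases (hf.ne hne).lt_or_gt with hlt | hlt
  · exact (rankBy_lt_rankBy hlt).ne h
  · exact (rankBy_lt_rankBy hlt).ne' h

end Rank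

section Kraft

variable {α : Type*} [Fintype α]

theorem card_filter_le_two_pow_of_kraft {L : α → ℕ} (hL : ∑ x, (2 : ℝ) ^ (-(L x : ℤ)) ≤ 1)
    (ℓ : ℕ) : #{x | L x ≤ ℓ} ≤ 2 ^ ℓ := by
  have hsum : (#{x | L x ≤ ℓ} : ℝ) * (2 : ℝ) ^ (-(ℓ : ℤ)) ≤ 1 := by
    calc (#{x | L x ≤ ℓ} : ℝ) * (2 : ℝ) ^ (-(ℓ : ℤ))
        ≤ ∑ x ∈ {x | L x ≤ ℓ}, (2 : ℝ) ^ (-(L x : ℤ)) := by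
          rw [← nsmul_eq_mul]
          refine card_nsmul_le_sum _ _ _ fun x hx => ?_
          have hx : L x ≤ ℓ := (mem_filter.mp hx).2
          exact zpow_le_zpow_right₀ one_le_two (by omega)
      _ ≤ ∑ x, (2 : ℝ) ^ (-(L x : ℤ)) :=
          sum_le_sum_of_subset_of_nonneg (subset_univ _) fun _ _ _ => by positivity
      _ ≤ 1 := hL
  rw [zpow_neg, zpow_natCast, ← div_eq_mul_inv, div_le_one (by positivity)] at hsum
  exact_mod_cast hsum

theorem exists_guessing_le_two_pow_of_kraft {L : α → ℕ}
    (hL : ∑ x, (2 : ℝ) ^ (-(L x : ℤ)) ≤ 1) :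
    ∃ G : α → ℕ, Function.Injective G ∧ (∀ x, 1 ≤ G x ∧ G x ≤ Fintype.card α) ∧
      ∀ x, G x ≤ 2 ^ L x := by
  let e := Fintype.equivFin α
  let f : α → ℕ ×ₗ Fin (Fintype.card α) := fun x => toLex (L x, e x)
  have hf : Function.Injective f := fun x y h => e.injective (congrArg Prod.snd (toLex.injective h))
  refine ⟨rankBy f, rankBy_injective hf, fun x => ⟨one_le_rankBy f x, rankBy_le_card f x⟩,
    fun x => le_trans (card_le_card fun y hy => ?_) (card_filter_le_two_pow_of_kraft hL (L x))⟩
  simp only [mem_filter, mem_univ, true_and] at hy ⊢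
  exact Prod.Lex.monotone_fst _ _ hy

end Kraft

section Shannon

variable {α : Type*} [Fintype α]

/-- The Shannon code lengths `⌈log₂ (1 / q(x))⌉` of the distribution `q ∝ 1 / w`. -/
noncomputable def shannonLength (w : α → ℝ) (x : α) : ℕ :=
  ⌈Real.logb 2 ((∑ y, (w y)⁻¹) * w x)⌉₊

variable {w : α → ℝ}

theorem one_le_sum_inv_mul (hw : ∀ x, 0 < w x) (x : α) : 1 ≤ (∑ y, (w y)⁻¹) * w x := by
  have hx : (w x)⁻¹ ≤ ∑ y, (w y)⁻¹ :=
    single_le_sum (fun y _ => (inv_pos.mpr (hw y)).le) (mem_univ x)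
  calc 1 = (w x)⁻¹ * w x := (inv_mul_cancel₀ (hw x).ne').symm
    _ ≤ _ := mul_le_mul_of_nonneg_right hx (hw x).le

theorem kraft_shannonLength (hw : ∀ x, 0 < w x) :
    ∑ x, (2 : ℝ) ^ (-(shannonLength w x : ℤ)) ≤ 1 := by
  set c := ∑ y, (w y)⁻¹
  have hterm : ∀ x, (2 : ℝ) ^ (-(shannonLength w x : ℤ)) ≤ c⁻¹ * (w x)⁻¹ := by
    intro x
    have hcw : 0 < c * w x := one_pos.trans_le (one_le_sum_inv_mul hw x)
    rw [← mul_inv, ← Real.rpow_logb two_pos (by norm_num) hcw, ← Real.rpow_neg zero_le_two,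
      ← Real.rpow_intCast]
    push_cast
    exact Real.rpow_le_rpow_of_exponent_le one_le_two (neg_le_neg (Nat.le_ceil _))
  calc ∑ x, (2 : ℝ) ^ (-(shannonLength w x : ℤ)) ≤ ∑ x, c⁻¹ * (w x)⁻¹ :=
        sum_le_sum fun x _ => hterm x
    _ = c⁻¹ * c := (mul_sum _ _ _).symm
    _ ≤ 1 := inv_mul_le_one

theorem two_pow_shannonLength_le (hw : ∀ x, 0 < w x) (x : α) :
    (2 : ℝ) ^ (shannonLength w x : ℝ) ≤ 2 * ((∑ y, (w y)⁻¹) * w x) := by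
  have hcw := one_le_sum_inv_mul hw x
  have hlog : 0 ≤ Real.logb 2 ((∑ y, (w y)⁻¹) * w x) := Real.logb_nonneg one_lt_two hcw
  calc (2 : ℝ) ^ (shannonLength w x : ℝ)
      ≤ (2 : ℝ) ^ (1 + Real.logb 2 ((∑ y, (w y)⁻¹) * w x)) :=
        Real.rpow_le_rpow_of_exponent_le one_le_two (by rw [add_comm]; exact (Nat.ceil_lt_add_one hlog).le)
    _ = 2 * ((∑ y, (w y)⁻¹) * w x) := by
        rw [Real.rpow_add two_pos, Real.rpow_one,
          Real.rpow_logb two_pos (by norm_num) (one_pos.trans_le hcw)]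

end Shannon

section Moments

variable {α : Type*} [Fintype α] {P : α → ℝ} {ρ : ℝ}

theorem optimal_guess_moment_le_of_kraft (hP0 : ∀ x, 0 ≤ P x) (hρ : 0 ≤ ρ) {Gstar : α → ℕ}
    (hGsOpt : ∀ G' : α → ℕ, Function.Injective G' →
      (∀ x, 1 ≤ G' x ∧ G' x ≤ Fintype.card α) →
      ∑ x, P x * (Gstar x : ℝ) ^ ρ ≤ ∑ x, P x * (G' x : ℝ) ^ ρ)
    {L : α → ℕ} (hL : ∑ x, (2 : ℝ) ^ (-(L x : ℤ)) ≤ 1) :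
    ∑ x, P x * (Gstar x : ℝ) ^ ρ ≤ ∑ x, P x * (2 : ℝ) ^ (ρ * (L x : ℝ)) := by
  obtain ⟨G, hGinj, hGrange, hGle⟩ := exists_guessing_le_two_pow_of_kraft hL
  refine (hGsOpt G hGinj hGrange).trans (sum_le_sum fun x _ => ?_)
  refine mul_le_mul_of_nonneg_left ?_ (hP0 x)
  rw [mul_comm, Real.rpow_mul zero_le_two, Real.rpow_natCast]
  exact Real.rpow_le_rpow (Nat.cast_nonneg _) (by exact_mod_cast hGle x) hρ

theorem optimal_code_moment_le (hP0 : ∀ x, 0 ≤ P x) (hρ : 0 ≤ ρ) {Lstar : α → ℕ}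
    (hLstarOpt : ∀ L' : α → ℕ, (∑ x, (2 : ℝ) ^ (-(L' x : ℤ)) ≤ 1) →
      ∑ x, P x * (2 : ℝ) ^ (ρ * (Lstar x : ℝ)) ≤ ∑ x, P x * (2 : ℝ) ^ (ρ * (L' x : ℝ)))
    {G : α → ℕ} (hG : ∀ x, 1 ≤ G x) :
    ∑ x, P x * (2 : ℝ) ^ (ρ * (Lstar x : ℝ)) ≤
      (2 * ∑ x, ((G x : ℝ))⁻¹) ^ ρ * ∑ x, P x * (G x : ℝ) ^ ρ := by
  have hpos : ∀ x, 0 < (G x : ℝ) := fun x => by exact_mod_cast hG x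
  refine (hLstarOpt _ (kraft_shannonLength hpos)).trans ?_
  rw [mul_sum]
  refine sum_le_sum fun x _ => ?_
  rw [mul_left_comm]
  refine mul_le_mul_of_nonneg_left ?_ (hP0 x)
  rw [← Real.mul_rpow (by positivity) (hpos x).le, mul_comm ρ, Real.rpow_mul zero_le_two, mul_assoc]
  exact Real.rpow_le_rpow (by positivity) (two_pow_shannonLength_le hpos x) hρ

end Moments

theorem sum_inv_eq_sum_Icc {α : Type*} [Fintype α] {G : α → ℕ} (hinj : Function.Injective G)
    (hrange : ∀ x, 1 ≤ G x ∧ G x ≤ Fintype.card α) :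
    ∑ x, ((G x : ℝ))⁻¹ = ∑ i ∈ Icc 1 (Fintype.card α), (1 : ℝ) / i := by
  classical
  have himage : univ.image G = Icc 1 (Fintype.card α) := by
    refine eq_of_subset_of_card_le (fun i hi => ?_) ?_
    · obtain ⟨x, -, rfl⟩ := mem_image.mp hi
      exact mem_Icc.mpr (hrange x)
    · simp [card_image_of_injective _ hinj]
  rw [← himage, sum_image hinj.injOn]
  simp only [one_div]

theorem abs_inv_mul_logb_sub_le {b ρ A B K : ℝ} (hb : 1 < b) (hρ : 0 < ρ) (hA : 0 < A)
    (hK : 0 < K) (hAB : A ≤ B) (hBA : B ≤ K ^ ρ * A) :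
    |1 / ρ * Real.logb b A - 1 / ρ * Real.logb b B| ≤ Real.logb b K := by
  have hlogAB : Real.logb b A ≤ Real.logb b B := Real.logb_le_logb_of_le hb hA hAB
  have hlogBA : Real.logb b B ≤ ρ * Real.logb b K + Real.logb b A := by
    calc Real.logb b B ≤ Real.logb b (K ^ ρ * A) := Real.logb_le_logb_of_le hb (hA.trans_le hAB) hBA
      _ = ρ * Real.logb b K + Real.logb b A := by
        rw [Real.logb_mul (by positivity) hA.ne', Real.logb_rpow_eq_mul_logb_of_pos hK]
  rw [← mul_sub, abs_mul, abs_of_pos (by positivity), abs_sub_comm,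
    abs_of_nonneg (sub_nonneg.mpr hlogAB), one_div_mul_eq_div, div_le_iff₀ hρ]
  linarith

/-- The optimal guessing exponent is within `1 + log₂ c` of the optimal coding exponent:
`|ρ⁻¹ log₂ E[G*(X)^ρ] - ρ⁻¹ log₂ E[2^{ρ L*(X)}]| ≤ 1 + log₂ c`. -/
theorem optimal_guess_code_gap {α : Type*} [Fintype α] [Nonempty α]
    (P : α → ℝ) (hP0 : ∀ x, 0 ≤ P x) (hP1 : ∑ x, P x = 1)
    (ρ : ℝ) (hρ : 0 < ρ)
    -- `Gstar` is an optimal guessing function: it minimizes `E[G(X)^ρ]` over bijections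
    (Gstar : α → ℕ) (hGsinj : Function.Injective Gstar)
    (hGsrange : ∀ x, 1 ≤ Gstar x ∧ Gstar x ≤ Fintype.card α)
    (hGsOpt : ∀ G' : α → ℕ, Function.Injective G' →
      (∀ x, 1 ≤ G' x ∧ G' x ≤ Fintype.card α) →
      ∑ x, P x * (Gstar x : ℝ) ^ ρ ≤ ∑ x, P x * (G' x : ℝ) ^ ρ)
    -- `Lstar` is an optimal length function: it minimizes `E[2^{ρ L(X)}]` subject to Kraft
    (Lstar : α → ℕ) (hKraftStar : ∑ x, (2 : ℝ) ^ (-(Lstar x : ℤ)) ≤ 1)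
    (hLstarOpt : ∀ L' : α → ℕ, (∑ x, (2 : ℝ) ^ (-(L' x : ℤ)) ≤ 1) →
      ∑ x, P x * (2 : ℝ) ^ (ρ * (Lstar x : ℝ)) ≤ ∑ x, P x * (2 : ℝ) ^ (ρ * (L' x : ℝ)))
    (c : ℝ) (hc : c = ∑ i ∈ Finset.Icc 1 (Fintype.card α), (1 : ℝ) / i) :
    |(1 / ρ) * Real.logb 2 (∑ x, P x * (Gstar x : ℝ) ^ ρ) -
      (1 / ρ) * Real.logb 2 (∑ x, P x * (2 : ℝ) ^ (ρ * (Lstar x : ℝ)))| ≤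
      1 + Real.logb 2 c := by
  rw [← sum_inv_eq_sum_Icc hGsinj hGsrange] at hc
  subst hc
  have hc : 0 < ∑ x, ((Gstar x : ℝ))⁻¹ :=
    sum_pos (fun x _ => by have := (hGsrange x).1; positivity) univ_nonempty
  have hA : 0 < ∑ x, P x * (Gstar x : ℝ) ^ ρ := by
    calc (0 : ℝ) < ∑ x, P x := hP1 ▸ one_pos
      _ ≤ ∑ x, P x * (Gstar x : ℝ) ^ ρ := sum_le_sum fun x _ =>
        le_mul_of_one_le_right (hP0 x)
          (Real.one_le_rpow (by exact_mod_cast (hGsrange x).1) hρ.le)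
  calc _ ≤ Real.logb 2 (2 * ∑ x, ((Gstar x : ℝ))⁻¹) :=
        abs_inv_mul_logb_sub_le one_lt_two hρ hA (by positivity)
          (optimal_guess_moment_le_of_kraft hP0 hρ.le hGsOpt hKraftStar)
          (optimal_code_moment_le hP0 hρ.le hLstarOpt fun x => (hGsrange x).1)
    _ = 1 + Real.logb 2 (∑ x, ((Gstar x : ℝ))⁻¹) := by
        rw [Real.logb_mul two_ne_zero hc.ne', Real.logb_self_eq_one one_lt_two]
end

section
/- Let L be a length function on a finite set X satisfying Kraft's inequality and G_L its associated guessing function (increasing order of L-lengths). Then for any B \ge 1, {x : G_L(x) \ge 2^B} \subseteq {x : L(x) \ge B}. -/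
/-!
Every `y` guessed no later than `x` has `L y ≤ L x`, so Kraft's inequality allows at most
`2 ^ L x` of them; since `G` enumerates `1, …, |α|`, there are at least `G x` of them.
Hence `2 ^ B ≤ G x ≤ 2 ^ L x`.
-/

open Finset

theorem card_le_two_pow_of_kraft {α : Type*} [Fintype α] {L : α → ℕ}
    (hKraft : ∑ x, (2 : ℝ) ^ (-(L x : ℤ)) ≤ 1) {s : Finset α} {k : ℕ}
    (hs : ∀ y ∈ s, L y ≤ k) : (#s : ℝ) ≤ 2 ^ k := by
  have hsum : (#s : ℝ) * (2 : ℝ) ^ (-(k : ℤ)) ≤ 1 :=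
    calc (#s : ℝ) * (2 : ℝ) ^ (-(k : ℤ)) = ∑ _y ∈ s, (2 : ℝ) ^ (-(k : ℤ)) := by
          rw [sum_const, nsmul_eq_mul]
      _ ≤ ∑ y ∈ s, (2 : ℝ) ^ (-(L y : ℤ)) :=
          sum_le_sum fun y hy => zpow_le_zpow_right₀ one_le_two (by grind)
      _ ≤ ∑ y, (2 : ℝ) ^ (-(L y : ℤ)) :=
          sum_le_sum_of_subset_of_nonneg (subset_univ s) fun _ _ _ => by positivity
      _ ≤ 1 := hKraft
  rwa [zpow_neg, zpow_natCast, ← div_eq_mul_inv, div_le_one (by positivity)] at hsum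

theorem le_card_filter_le_of_injective {α : Type*} [Fintype α] {G : α → ℕ}
    (hGinj : Function.Injective G) (hG : ∀ y, G y ≤ Fintype.card α) {m : ℕ}
    (hm : m ≤ Fintype.card α) : m ≤ #{y | G y ≤ m} := by
  have hlarge : #{y | ¬G y ≤ m} ≤ Fintype.card α - m := by
    simpa using card_le_card_of_injOn G (t := Ioc m (Fintype.card α))
      (fun y hy => by simp_all) hGinj.injOn
  have hsplit := card_filter_add_card_filter_not (s := univ) (fun y => G y ≤ m)
  rw [card_univ] at hsplit
  omega

theorem guess_level_subset_length_level_general {α : Type*} [Fintype α]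
    (L : α → ℕ) (hKraft : ∑ x, (2 : ℝ) ^ (-(L x : ℤ)) ≤ 1)
    (G : α → ℕ) (hGinj : Function.Injective G)
    (hGrange : ∀ x, 1 ≤ G x ∧ G x ≤ Fintype.card α)
    (hinc : ∀ a b, G a ≤ G b → L a ≤ L b)
    (B : ℝ) :
    {x : α | (2 : ℝ) ^ B ≤ (G x : ℝ)} ⊆ {x : α | B ≤ (L x : ℝ)} := by
  intro x hx
  have hGx : (G x : ℝ) ≤ #{y | G y ≤ G x} := by
    exact_mod_cast le_card_filter_le_of_injective hGinj (fun y => (hGrange y).2) (hGrange x).2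
  have hcard : (#{y | G y ≤ G x} : ℝ) ≤ 2 ^ L x :=
    card_le_two_pow_of_kraft hKraft fun y hy => hinc y x (mem_filter.mp hy).2
  rw [Set.mem_ofPred_eq, ← Real.rpow_le_rpow_left_iff one_lt_two, Real.rpow_natCast]
  exact hx.trans (hGx.trans hcard)

/-- For a length function `L` satisfying Kraft's inequality and its associated guessing
function `G_L`, for any `B ≥ 1`, `{G_L ≥ 2^B} ⊆ {L ≥ B}`. -/
theorem guess_level_subset_length_level {α : Type*} [Fintype α] [Nonempty α]
    (L : α → ℕ) (hKraft : ∑ x, (2 : ℝ) ^ (-(L x : ℤ)) ≤ 1)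
    (G : α → ℕ) (hGinj : Function.Injective G)
    (hGrange : ∀ x, 1 ≤ G x ∧ G x ≤ Fintype.card α)
    (hinc : ∀ a b, G a ≤ G b → L a ≤ L b)
    (B : ℝ) (hB : 1 ≤ B) :
    {x : α | (2 : ℝ) ^ B ≤ (G x : ℝ)} ⊆ {x : α | B ≤ (L x : ℝ)} :=
  guess_level_subset_length_level_general L hKraft G hGinj hGrange hinc B
end

section
/- For a pmf P on a finite set X and \rho > 0, with \alpha = 1/(1+\rho), the Rényi entropy satisfies the variational identity: \rho H_\alpha(P) = \sup over pmfs Q on X with Q \ll P of { \rho H(Q) - D(Q \| P) }, where H is Shannon entropy and D is relative entropy (all in nats). -/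
/-!
Put `a = 1/(1+ρ)` and let `E = P^a / ∑ P^a` be the escort distribution of `P`. Since
`(1+ρ) a = 1`, for every `Q ≪ P` the objective rewrites as
`ρ H(Q) - D(Q‖P) = (1+ρ) (log ∑ P^a - D(Q‖E))`,
so by Gibbs' inequality it is at most `(1+ρ) log ∑ P^a = ρ H_a(P)`, with equality at `Q = E`.
-/

open Real Finset

namespace Real

theorem mul_log_div_le_sub {p q : ℝ} (hp : 0 ≤ p) (hq : 0 ≤ q) (hpq : p = 0 → q = 0) :
    q * log (p / q) ≤ p - q := by
  rcases hq.eq_or_lt with rfl | hq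
  · simpa using hp
  have hp : 0 < p := hp.lt_of_ne fun h => hq.ne' (hpq h.symm)
  calc q * log (p / q) ≤ q * (p / q - 1) :=
        mul_le_mul_of_nonneg_left (log_le_sub_one_of_pos (div_pos hp hq)) hq.le
    _ = p - q := by field_simp

end Real

section Finite

variable {α : Type*} [Fintype α]

theorem sum_mul_log_div_le_sum_sub {p q : α → ℝ} (hp : ∀ x, 0 ≤ p x) (hq : ∀ x, 0 ≤ q x)
    (hpq : ∀ x, p x = 0 → q x = 0) :
    ∑ x, q x * log (p x / q x) ≤ ∑ x, p x - ∑ x, q x := by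
  rw [← sum_sub_distrib]
  exact sum_le_sum fun x _ => mul_log_div_le_sub (hp x) (hq x) (hpq x)

noncomputable def escort (P : α → ℝ) (a : ℝ) (x : α) : ℝ :=
  P x ^ a / ∑ y, P y ^ a

section escort

variable {P : α → ℝ} {a : ℝ}

theorem sum_rpow_pos (hP0 : ∀ x, 0 ≤ P x) (hP : ∃ x, 0 < P x) : 0 < ∑ x, P x ^ a := by
  obtain ⟨x, hx⟩ := hP
  exact sum_pos_iff_of_nonneg (fun y _ => rpow_nonneg (hP0 y) a) |>.2
    ⟨x, mem_univ x, rpow_pos_of_pos hx a⟩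

theorem escort_nonneg (hP0 : ∀ x, 0 ≤ P x) (x : α) : 0 ≤ escort P a x :=
  div_nonneg (rpow_nonneg (hP0 x) a) (sum_nonneg fun y _ => rpow_nonneg (hP0 y) a)

theorem sum_escort (hP0 : ∀ x, 0 ≤ P x) (hP : ∃ x, 0 < P x) : ∑ x, escort P a x = 1 := by
  simp only [escort]
  rw [← sum_div, div_self (sum_rpow_pos hP0 hP).ne']

theorem escort_pos (hP0 : ∀ x, 0 ≤ P x) {x : α} (hx : 0 < P x) : 0 < escort P a x :=
  div_pos (rpow_pos_of_pos hx a) (sum_rpow_pos hP0 ⟨x, hx⟩)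

theorem escort_eq_zero_iff (ha : a ≠ 0) (hP0 : ∀ x, 0 ≤ P x) {x : α} :
    escort P a x = 0 ↔ P x = 0 := by
  refine ⟨fun hx => by_contra fun h => (escort_pos hP0 ((hP0 x).lt_of_ne' h)).ne' hx, fun hx => ?_⟩
  simp [escort, hx, zero_rpow ha]

theorem log_escort (hP0 : ∀ x, 0 ≤ P x) {x : α} (hx : 0 < P x) :
    log (escort P a x) = a * log (P x) - log (∑ y, P y ^ a) := by
  rw [escort, log_div (rpow_pos_of_pos hx a).ne' (sum_rpow_pos hP0 ⟨x, hx⟩).ne', log_rpow hx]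

end escort

noncomputable def renyiObjective (ρ : ℝ) (P Q : α → ℝ) : ℝ :=
  ρ * (-∑ x, Q x * log (Q x)) - ∑ x, Q x * log (Q x / P x)

theorem renyiObjective_eq {ρ : ℝ} (hρ : 1 + ρ ≠ 0) {P Q : α → ℝ} (hP0 : ∀ x, 0 ≤ P x)
    (hQ1 : ∑ x, Q x = 1) (hQP : ∀ x, P x = 0 → Q x = 0) :
    renyiObjective ρ P Q = (1 + ρ) * (log (∑ x, P x ^ (1 / (1 + ρ))) +
      ∑ x, Q x * log (escort P (1 / (1 + ρ)) x / Q x)) := by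
  set S := ∑ x, P x ^ (1 / (1 + ρ))
  have hterm : ∀ x, ρ * -(Q x * log (Q x)) - Q x * log (Q x / P x) =
      (1 + ρ) * (Q x * log S + Q x * log (escort P (1 / (1 + ρ)) x / Q x)) := by
    intro x
    by_cases hQx : Q x = 0
    · simp [hQx]
    have hPx : 0 < P x := (hP0 x).lt_of_ne fun h => hQx (hQP x h.symm)
    rw [log_div hQx hPx.ne', log_div (escort_pos hP0 hPx).ne' hQx, log_escort hP0 hPx]
    field_simp
    ring
  calc renyiObjective ρ P Q = ∑ x, (ρ * -(Q x * log (Q x)) - Q x * log (Q x / P x)) := by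
        simp only [renyiObjective, sum_sub_distrib, mul_neg, mul_sum, sum_neg_distrib]
    _ = ∑ x, (1 + ρ) * (Q x * log S + Q x * log (escort P (1 / (1 + ρ)) x / Q x)) :=
        sum_congr rfl fun x _ => hterm x
    _ = _ := by rw [← mul_sum, sum_add_distrib, ← sum_mul, hQ1, one_mul]

theorem isGreatest_renyiObjective {ρ : ℝ} (hρ : 0 < 1 + ρ) {P : α → ℝ} (hP0 : ∀ x, 0 ≤ P x)
    (hP : ∃ x, 0 < P x) :
    IsGreatest {r | ∃ Q : α → ℝ, (∀ x, 0 ≤ Q x) ∧ (∑ x, Q x = 1) ∧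
        (∀ x, P x = 0 → Q x = 0) ∧ r = renyiObjective ρ P Q}
      ((1 + ρ) * log (∑ x, P x ^ (1 / (1 + ρ)))) := by
  have ha : 1 / (1 + ρ) ≠ 0 := by positivity
  have hE1 := sum_escort (a := 1 / (1 + ρ)) hP0 hP
  have hEP : ∀ x, P x = 0 → escort P (1 / (1 + ρ)) x = 0 :=
    fun x => (escort_eq_zero_iff ha hP0).2
  refine ⟨⟨escort P (1 / (1 + ρ)), escort_nonneg hP0, hE1, hEP, ?_⟩, ?_⟩
  · rw [renyiObjective_eq hρ.ne' hP0 hE1 hEP]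
    simp only [log_div_self, mul_zero, sum_const_zero, add_zero]
  · rintro r ⟨Q, hQ0, hQ1, hQP, rfl⟩
    have hgibbs : ∑ x, Q x * log (escort P (1 / (1 + ρ)) x / Q x) ≤ 0 := by
      simpa only [hE1, hQ1, sub_self] using
        sum_mul_log_div_le_sum_sub (escort_nonneg (a := 1 / (1 + ρ)) hP0) hQ0
          fun x hx => hQP x ((escort_eq_zero_iff ha hP0).1 hx)
    rw [renyiObjective_eq hρ.ne' hP0 hQ1 hQP]
    exact mul_le_mul_of_nonneg_left (add_le_of_nonpos_right hgibbs) hρ.le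

end Finite

theorem renyi_variational_general {α : Type*} [Fintype α]
    (P : α → ℝ) (hP0 : ∀ x, 0 ≤ P x) (hP1 : ∑ x, P x = 1)
    (ρ : ℝ) (hρ : 0 < ρ) :
    ρ * ((1 - 1 / (1 + ρ))⁻¹ * Real.log (∑ x, P x ^ ((1 : ℝ) / (1 + ρ)))) =
      sSup {r : ℝ | ∃ Q : α → ℝ, (∀ x, 0 ≤ Q x) ∧ (∑ x, Q x = 1) ∧
        (∀ x, P x = 0 → Q x = 0) ∧
        r = ρ * (-∑ x, Q x * Real.log (Q x)) - ∑ x, Q x * Real.log (Q x / P x)} := by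
  have hP : ∃ x, 0 < P x := by
    obtain ⟨x, -, hx⟩ := (sum_pos_iff_of_nonneg fun x _ => hP0 x).1 (hP1 ▸ one_pos)
    exact ⟨x, hx⟩
  have hcoef : ρ * (1 - 1 / (1 + ρ))⁻¹ = 1 + ρ := by
    rw [one_sub_div (by linarith), add_sub_cancel_left, inv_div, mul_div_cancel₀ _ hρ.ne']
  rw [← mul_assoc, hcoef]
  exact (isGreatest_renyiObjective (by linarith) hP0 hP).csSup_eq.symm

/-- Variational characterization of Rényi entropy: for a pmf `P` on a finite set and
`α = 1/(1+ρ)`, `ρ H_α(P) = sup_{Q ≪ P} { ρ H(Q) - D(Q‖P) }` (in nats). -/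
theorem renyi_variational {α : Type*} [Fintype α] [Nonempty α]
    (P : α → ℝ) (hP0 : ∀ x, 0 ≤ P x) (hP1 : ∑ x, P x = 1)
    (ρ : ℝ) (hρ : 0 < ρ) :
    ρ * ((1 - 1 / (1 + ρ))⁻¹ * Real.log (∑ x, P x ^ ((1 : ℝ) / (1 + ρ)))) =
      sSup {r : ℝ | ∃ Q : α → ℝ, (∀ x, 0 ≤ Q x) ∧ (∑ x, Q x = 1) ∧
        (∀ x, P x = 0 → Q x = 0) ∧
        r = ρ * (-∑ x, Q x * Real.log (Q x)) - ∑ x, Q x * Real.log (Q x / P x)} :=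
  renyi_variational_general P hP0 hP1 ρ hρ
end

section
/- For any pmf P on a finite set X and any bounded function f : X \to \mathbb{R}, \ln E_P[\exp f(X)] = \sup over pmfs Q \ll P of { E_Q[f(X)] - D(Q \| P) } (the Donsker–Varadhan / Legendre–Fenchel variational formula for the cumulant). -/
open Real Finset

/-- Gibbs' inequality: nonnegativity of relative entropy (finite case). -/
lemma gibbs_nonneg_aux {α : Type*} [Fintype α] (Q R : α → ℝ)
    (hQ : ∀ x, 0 ≤ Q x) (hR : ∀ x, 0 < R x)
    (h : ∑ x, Q x = ∑ x, R x) :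
    0 ≤ ∑ x, Q x * Real.log (Q x / R x) := by
  have key : ∑ x, Q x * Real.log (R x / Q x) ≤ ∑ x, (R x - Q x) := by
    apply Finset.sum_le_sum
    intro x _
    rcases eq_or_lt_of_le (hQ x) with h0 | h0
    · simp [← h0, (hR x).le]
    · have hlog := Real.log_le_sub_one_of_pos (div_pos (hR x) h0)
      calc Q x * Real.log (R x / Q x) ≤ Q x * (R x / Q x - 1) :=
            mul_le_mul_of_nonneg_left hlog (hQ x)
        _ = R x - Q x := by field_simp
  have hsum : ∑ x, (R x - Q x) = 0 := by
    rw [Finset.sum_sub_distrib, h, sub_self]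
  have heq : ∑ x, Q x * Real.log (Q x / R x)
      = -∑ x, Q x * Real.log (R x / Q x) := by
    rw [← Finset.sum_neg_distrib]
    apply Finset.sum_congr rfl
    intro x _
    rw [show Q x / R x = (R x / Q x)⁻¹ by rw [inv_div], Real.log_inv]
    ring
  rw [heq]
  linarith [key.trans_eq hsum]

/-- Donsker–Varadhan variational formula for the cumulant on a finite set:
`ln E_P[exp f(X)] = sup_{Q ≪ P} { E_Q[f] - D(Q‖P) }`. -/
theorem donsker_varadhan_finite {α : Type*} [Fintype α] [Nonempty α]
    (P : α → ℝ) (hP0 : ∀ x, 0 < P x) (hP1 : ∑ x, P x = 1)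
    (f : α → ℝ) :
    Real.log (∑ x, P x * Real.exp (f x)) =
      sSup {r : ℝ | ∃ Q : α → ℝ, (∀ x, 0 ≤ Q x) ∧ (∑ x, Q x = 1) ∧
        (∀ x, P x = 0 → Q x = 0) ∧
        r = (∑ x, Q x * f x) - ∑ x, Q x * Real.log (Q x / P x)} := by
  set Z : ℝ := ∑ x, P x * Real.exp (f x) with hZdef
  have hZpos : 0 < Z :=
    Finset.sum_pos (fun x _ => mul_pos (hP0 x) (Real.exp_pos _)) Finset.univ_nonempty
  set Qs : α → ℝ := fun x => P x * Real.exp (f x) / Z with hQs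
  have hQspos : ∀ x, 0 < Qs x := fun x =>
    div_pos (mul_pos (hP0 x) (Real.exp_pos _)) hZpos
  have hQsum : ∑ x, Qs x = 1 := by
    rw [hQs, ← Finset.sum_div, ← hZdef, div_self hZpos.ne']
  have hlogQs : ∀ x, Real.log (Qs x / P x) = f x - Real.log Z := by
    intro x
    have : Qs x / P x = Real.exp (f x) / Z := by
      rw [hQs]; field_simp [(hP0 x).ne', hZpos.ne']
    rw [this, Real.log_div (Real.exp_pos _).ne' hZpos.ne', Real.log_exp]
  have hmem : Real.log Z ∈ {r : ℝ | ∃ Q : α → ℝ, (∀ x, 0 ≤ Q x) ∧ (∑ x, Q x = 1) ∧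
        (∀ x, P x = 0 → Q x = 0) ∧
        r = (∑ x, Q x * f x) - ∑ x, Q x * Real.log (Q x / P x)} := by
    refine ⟨Qs, fun x => (hQspos x).le, hQsum, fun x hx => absurd hx (hP0 x).ne', ?_⟩
    have : (∑ x, Qs x * f x) - ∑ x, Qs x * Real.log (Qs x / P x)
        = ∑ x, Qs x * Real.log Z := by
      rw [← Finset.sum_sub_distrib]
      apply Finset.sum_congr rfl
      intro x _
      rw [hlogQs x]; ring
    rw [this, ← Finset.sum_mul, hQsum, one_mul]
  have hub : ∀ r ∈ {r : ℝ | ∃ Q : α → ℝ, (∀ x, 0 ≤ Q x) ∧ (∑ x, Q x = 1) ∧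
        (∀ x, P x = 0 → Q x = 0) ∧
        r = (∑ x, Q x * f x) - ∑ x, Q x * Real.log (Q x / P x)}, r ≤ Real.log Z := by
    rintro r ⟨Q, hQ0, hQ1, _, rfl⟩
    have hgibbs := gibbs_nonneg_aux Q Qs hQ0 hQspos (by rw [hQ1, hQsum])
    have hsplit : ∑ x, Q x * Real.log (Q x / Qs x)
        = (∑ x, Q x * Real.log (Q x / P x)) - (∑ x, Q x * f x)
          + (∑ x, Q x) * Real.log Z := by
      rw [Finset.sum_mul, ← Finset.sum_sub_distrib, ← Finset.sum_add_distrib]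
      apply Finset.sum_congr rfl
      intro x _
      rcases eq_or_lt_of_le (hQ0 x) with h0 | h0
      · simp [← h0]
      · have : Q x / Qs x = (Q x / P x) / (Real.exp (f x) / Z) := by
          rw [hQs]; field_simp [(hP0 x).ne', hZpos.ne']
        rw [this, Real.log_div (div_pos h0 (hP0 x)).ne'
            (div_pos (Real.exp_pos _) hZpos).ne',
            Real.log_div (Real.exp_pos _).ne' hZpos.ne', Real.log_exp]
        ring
    rw [hsplit, hQ1, one_mul] at hgibbs
    linarith
  exact le_antisymm (le_csSup ⟨Real.log Z, hub⟩ hmem) (csSup_le ⟨Real.log Z, hmem⟩ hub)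
end

section
/- Let R and S be pmfs on a finite set X with full support, \lambda \in (0,1), and let P_n(x^n) = \lambda\prod_i R(x_i) + (1-\lambda)\prod_i S(x_i) be a mixed source. For \alpha \in (0,1), lim_{n\to\infty} n^{-1} H_\alpha(P_n) = \max\{H_\alpha(R), H_\alpha(S)\}. -/
private lemma rpow_subadd {a b p : ℝ} (ha : 0 ≤ a) (hb : 0 ≤ b) (hp : 0 ≤ p) (hp1 : p ≤ 1) :
    (a + b) ^ p ≤ a ^ p + b ^ p := by
  lift a to NNReal using ha
  lift b to NNReal using hb
  exact_mod_cast NNReal.rpow_add_le_add_rpow a b hp hp1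

/-- For a mixture of two iid sources with full-support marginals `R` and `S`, the limiting
normalized Rényi entropy of order `α ∈ (0,1)` is `max{H_α(R), H_α(S)}`. -/
theorem renyi_rate_mixed_source {𝕏 : Type*} [Fintype 𝕏] [Nonempty 𝕏]
    (R S : 𝕏 → ℝ) (hR0 : ∀ x, 0 < R x) (hR1 : ∑ x, R x = 1)
    (hS0 : ∀ x, 0 < S x) (hS1 : ∑ x, S x = 1)
    (lam : ℝ) (hlam : lam ∈ Set.Ioo (0 : ℝ) 1)
    (α : ℝ) (hα : α ∈ Set.Ioo (0 : ℝ) 1) :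
    Filter.Tendsto
      (fun n : ℕ =>
        (1 / (n : ℝ)) * ((1 - α)⁻¹ * Real.log
          (∑ x : Fin n → 𝕏, (lam * ∏ i, R (x i) + (1 - lam) * ∏ i, S (x i)) ^ α)))
      Filter.atTop
      (nhds (max ((1 - α)⁻¹ * Real.log (∑ a, R a ^ α))
                 ((1 - α)⁻¹ * Real.log (∑ a, S a ^ α)))) := by
  obtain ⟨hl0, hl1⟩ := hlam
  obtain ⟨hα0, hα1⟩ := hα
  have hl1' : 0 < 1 - lam := by linarith
  have hαle : α ≤ 1 := hα1.le
  set A : ℝ := ∑ a, R a ^ α with hA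
  set B : ℝ := ∑ a, S a ^ α with hB
  have hA0 : 0 < A := Finset.sum_pos (fun a _ => Real.rpow_pos_of_pos (hR0 a) α)
    Finset.univ_nonempty
  have hB0 : 0 < B := Finset.sum_pos (fun a _ => Real.rpow_pos_of_pos (hS0 a) α)
    Finset.univ_nonempty
  set M : ℝ := max A B with hM
  have hM0 : 0 < M := lt_max_of_lt_left hA0
  set c : ℝ := min (lam ^ α) ((1 - lam) ^ α) with hc
  set C : ℝ := lam ^ α + (1 - lam) ^ α with hC
  have hc0 : 0 < c := lt_min (Real.rpow_pos_of_pos hl0 α) (Real.rpow_pos_of_pos hl1' α)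
  have hC0 : 0 < C := by positivity
  set Z : ℕ → ℝ := fun n =>
    ∑ x : Fin n → 𝕏, (lam * ∏ i, R (x i) + (1 - lam) * ∏ i, S (x i)) ^ α with hZ
  -- positivity of each term
  have hterm : ∀ n (x : Fin n → 𝕏),
      0 < lam * ∏ i, R (x i) + (1 - lam) * ∏ i, S (x i) := by
    intro n x
    have h1 : 0 < ∏ i, R (x i) := Finset.prod_pos fun i _ => hR0 (x i)
    have h2 : 0 < ∏ i, S (x i) := Finset.prod_pos fun i _ => hS0 (x i)
    positivity
  -- lower bound via R
  have hlowR : ∀ n : ℕ, lam ^ α * A ^ n ≤ Z n := by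
    intro n
    rw [hA, Fintype.sum_pow (fun a => R a ^ α) n, Finset.mul_sum]
    apply Finset.sum_le_sum
    intro x _
    have h1 : ∀ i ∈ (Finset.univ : Finset (Fin n)), 0 ≤ R (x i) := fun i _ => (hR0 _).le
    have hpr : 0 < ∏ i, R (x i) := Finset.prod_pos fun i _ => hR0 (x i)
    have hps : 0 < ∏ i, S (x i) := Finset.prod_pos fun i _ => hS0 (x i)
    rw [Real.finset_prod_rpow _ _ h1, ← Real.mul_rpow hl0.le (Finset.prod_nonneg h1)]
    apply Real.rpow_le_rpow (by positivity) _ hα0.le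
    nlinarith
  have hlowS : ∀ n : ℕ, (1 - lam) ^ α * B ^ n ≤ Z n := by
    intro n
    rw [hB, Fintype.sum_pow (fun a => S a ^ α) n, Finset.mul_sum]
    apply Finset.sum_le_sum
    intro x _
    have h1 : ∀ i ∈ (Finset.univ : Finset (Fin n)), 0 ≤ S (x i) := fun i _ => (hS0 _).le
    have hpr : 0 < ∏ i, R (x i) := Finset.prod_pos fun i _ => hR0 (x i)
    have hps : 0 < ∏ i, S (x i) := Finset.prod_pos fun i _ => hS0 (x i)
    rw [Real.finset_prod_rpow _ _ h1, ← Real.mul_rpow hl1'.le (Finset.prod_nonneg h1)]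
    apply Real.rpow_le_rpow (by positivity) _ hα0.le
    nlinarith
  have hlow : ∀ n : ℕ, c * M ^ n ≤ Z n := by
    intro n
    rcases le_total A B with h | h
    · calc c * M ^ n ≤ (1 - lam) ^ α * B ^ n := by
            rw [hM, max_eq_right h]
            exact mul_le_mul (min_le_right _ _) le_rfl (pow_nonneg hB0.le n)
              (Real.rpow_nonneg hl1'.le α)
        _ ≤ Z n := hlowS n
    · calc c * M ^ n ≤ lam ^ α * A ^ n := by
            rw [hM, max_eq_left h]
            exact mul_le_mul (min_le_left _ _) le_rfl (pow_nonneg hA0.le n)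
              (Real.rpow_nonneg hl0.le α)
        _ ≤ Z n := hlowR n
  -- upper bound
  have hup : ∀ n : ℕ, Z n ≤ C * M ^ n := by
    intro n
    have step : Z n ≤ lam ^ α * A ^ n + (1 - lam) ^ α * B ^ n := by
      rw [hA, hB, Fintype.sum_pow (fun a => R a ^ α) n, Fintype.sum_pow (fun a => S a ^ α) n,
        Finset.mul_sum, Finset.mul_sum, ← Finset.sum_add_distrib]
      apply Finset.sum_le_sum
      intro x _
      have h1 : ∀ i ∈ (Finset.univ : Finset (Fin n)), 0 ≤ R (x i) := fun i _ => (hR0 _).le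
      have h2 : ∀ i ∈ (Finset.univ : Finset (Fin n)), 0 ≤ S (x i) := fun i _ => (hS0 _).le
      rw [Real.finset_prod_rpow _ _ h1, Real.finset_prod_rpow _ _ h2,
        ← Real.mul_rpow hl0.le (Finset.prod_nonneg h1),
        ← Real.mul_rpow hl1'.le (Finset.prod_nonneg h2)]
      have hpr : 0 < ∏ i, R (x i) := Finset.prod_pos fun i _ => hR0 (x i)
      have hps : 0 < ∏ i, S (x i) := Finset.prod_pos fun i _ => hS0 (x i)
      exact rpow_subadd (by positivity) (by positivity) hα0.le hαle
    have hAM : A ^ n ≤ M ^ n := pow_le_pow_left₀ hA0.le (le_max_left _ _) n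
    have hBM : B ^ n ≤ M ^ n := pow_le_pow_left₀ hB0.le (le_max_right _ _) n
    calc Z n ≤ lam ^ α * A ^ n + (1 - lam) ^ α * B ^ n := step
      _ ≤ lam ^ α * M ^ n + (1 - lam) ^ α * M ^ n :=
          add_le_add (mul_le_mul_of_nonneg_left hAM (Real.rpow_nonneg hl0.le α))
            (mul_le_mul_of_nonneg_left hBM (Real.rpow_nonneg hl1'.le α))
      _ = C * M ^ n := by rw [hC]; ring
  have hZ0 : ∀ n, 0 < Z n := fun n =>
    lt_of_lt_of_le (mul_pos hc0 (pow_pos hM0 n)) (hlow n)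
  -- log bounds
  have hloglow : ∀ n : ℕ, Real.log c + n * Real.log M ≤ Real.log (Z n) := by
    intro n
    have := Real.log_le_log (by positivity) (hlow n)
    rwa [Real.log_mul hc0.ne' (by positivity), Real.log_pow] at this
  have hlogup : ∀ n : ℕ, Real.log (Z n) ≤ Real.log C + n * Real.log M := by
    intro n
    have := Real.log_le_log (hZ0 n) (hup n)
    rwa [Real.log_mul hC0.ne' (by positivity), Real.log_pow] at this
  -- convergence of (1/n) log Z n
  have hg : Filter.Tendsto (fun n : ℕ => (1 / (n : ℝ)) * Real.log (Z n))
      Filter.atTop (nhds (Real.log M)) := by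
    have hL : Filter.Tendsto (fun n : ℕ => Real.log M + Real.log c * (1 / (n : ℝ)))
        Filter.atTop (nhds (Real.log M)) := by
      have := (tendsto_one_div_atTop_nhds_zero_nat.const_mul (Real.log c)).const_add
        (Real.log M)
      simpa using this
    have hU : Filter.Tendsto (fun n : ℕ => Real.log M + Real.log C * (1 / (n : ℝ)))
        Filter.atTop (nhds (Real.log M)) := by
      have := (tendsto_one_div_atTop_nhds_zero_nat.const_mul (Real.log C)).const_add
        (Real.log M)
      simpa using this
    apply tendsto_of_tendsto_of_tendsto_of_le_of_le' hL hU
    · filter_upwards [Filter.eventually_ge_atTop 1] with n hn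
      have hn0 : (0 : ℝ) < n := by exact_mod_cast hn
      rw [show (1 / (n : ℝ)) * Real.log (Z n) = Real.log (Z n) / n from by ring,
        le_div_iff₀ hn0]
      calc (Real.log M + Real.log c * (1 / (n : ℝ))) * n
          = Real.log c + n * Real.log M := by field_simp; ring
        _ ≤ Real.log (Z n) := hloglow n
    · filter_upwards [Filter.eventually_ge_atTop 1] with n hn
      have hn0 : (0 : ℝ) < n := by exact_mod_cast hn
      rw [show (1 / (n : ℝ)) * Real.log (Z n) = Real.log (Z n) / n from by ring,
        div_le_iff₀ hn0]
      calc Real.log (Z n) ≤ Real.log C + n * Real.log M := hlogup n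
        _ = (Real.log M + Real.log C * (1 / (n : ℝ))) * n := by field_simp; ring
  -- final value identity
  have hval : max ((1 - α)⁻¹ * Real.log A) ((1 - α)⁻¹ * Real.log B)
      = (1 - α)⁻¹ * Real.log M := by
    have ht : (0 : ℝ) ≤ (1 - α)⁻¹ := by
      have h1α : (0 : ℝ) < 1 - α := by linarith
      positivity
    rcases le_total A B with h | h
    · rw [hM, max_eq_right h, max_eq_right]
      exact mul_le_mul_of_nonneg_left (Real.log_le_log hA0 h) ht
    · rw [hM, max_eq_left h, max_eq_left]
      exact mul_le_mul_of_nonneg_left (Real.log_le_log hB0 h) ht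
  rw [hval]
  have := hg.const_mul ((1 - α)⁻¹)
  apply this.congr
  intro n
  ring
end

section
/- For any length function L on a finite set X satisfying Kraft's inequality, any pmf P on X, and any \rho > 0: E_P[2^{\rho L(X)}] \ge E_P[G_L(X)^\rho], where G_L is the guessing function associated with L (guessing in increasing order of L-lengths). -/
/-- For any length function `L` satisfying Kraft's inequality, any pmf `P`, and `ρ > 0`,
the exponentiated-length moment dominates the guessing moment of the associated guessing
function `G_L`: `E_P[2^{ρ L(X)}] ≥ E_P[G_L(X)^ρ]`. -/
theorem length_moment_ge_guessing_moment {α : Type*} [Fintype α] [Nonempty α]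
    (L : α → ℕ) (hKraft : ∑ x, (2 : ℝ) ^ (-(L x : ℤ)) ≤ 1)
    (P : α → ℝ) (hP0 : ∀ x, 0 ≤ P x) (hP1 : ∑ x, P x = 1)
    (ρ : ℝ) (hρ : 0 < ρ)
    (G : α → ℕ) (hGinj : Function.Injective G)
    (hGrange : ∀ x, 1 ≤ G x ∧ G x ≤ Fintype.card α)
    (hinc : ∀ a b, L a < L b → G a ≤ G b) :
    ∑ x, P x * (G x : ℝ) ^ ρ ≤ ∑ x, P x * (2 : ℝ) ^ (ρ * (L x : ℝ)) := by
  -- Key pointwise bound: G x ≤ 2 ^ L x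
  have key : ∀ x : α, (G x : ℝ) ≤ (2 : ℝ) ^ (L x : ℝ) := by
    intro x
    set S : Finset α := Finset.univ.filter (fun a => G a ≤ G x) with hS
    -- every a ∈ S has L a ≤ L x
    have hLS : ∀ a ∈ S, L a ≤ L x := by
      intro a ha
      by_contra h
      push_neg at h
      have h1 : G x ≤ G a := hinc x a h
      have h2 : G a ≤ G x := (Finset.mem_filter.mp ha).2
      have : a = x := hGinj (le_antisymm h2 h1)
      rw [this] at h
      exact lt_irrefl _ h
    -- G is a bijection onto Icc 1 (card α)
    have himg : Finset.image G Finset.univ = Finset.Icc 1 (Fintype.card α) := by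
      apply Finset.eq_of_subset_of_card_le
      · intro k hk
        simp only [Finset.mem_image] at hk
        obtain ⟨a, _, rfl⟩ := hk
        exact Finset.mem_Icc.mpr (hGrange a)
      · rw [Nat.card_Icc, Finset.card_image_of_injective _ hGinj]
        simp
    -- hence G x ≤ S.card
    have hcard : G x ≤ S.card := by
      have hsub : Finset.Icc 1 (G x) ⊆ Finset.image G S := by
        intro k hk
        rw [Finset.mem_Icc] at hk
        have : k ∈ Finset.image G Finset.univ := by
          rw [himg, Finset.mem_Icc]
          exact ⟨hk.1, hk.2.trans (hGrange x).2⟩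
        simp only [Finset.mem_image] at this ⊢
        obtain ⟨a, _, rfl⟩ := this
        exact ⟨a, Finset.mem_filter.mpr ⟨Finset.mem_univ a, hk.2⟩, rfl⟩
      calc G x = (Finset.Icc 1 (G x)).card := by simp
        _ ≤ (Finset.image G S).card := Finset.card_le_card hsub
        _ = S.card := Finset.card_image_of_injective _ hGinj
    -- Kraft bound on S
    have hsum : (S.card : ℝ) * (2 : ℝ) ^ (-(L x : ℤ)) ≤ 1 := by
      calc (S.card : ℝ) * (2 : ℝ) ^ (-(L x : ℤ))
          = ∑ _a ∈ S, (2 : ℝ) ^ (-(L x : ℤ)) := by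
            rw [Finset.sum_const, nsmul_eq_mul]
        _ ≤ ∑ a ∈ S, (2 : ℝ) ^ (-(L a : ℤ)) := by
            apply Finset.sum_le_sum
            intro a ha
            apply zpow_le_zpow_right₀ (by norm_num : (1:ℝ) ≤ 2)
            have := hLS a ha
            omega
        _ ≤ ∑ a, (2 : ℝ) ^ (-(L a : ℤ)) := by
            apply Finset.sum_le_sum_of_subset_of_nonneg (Finset.filter_subset _ _)
            intro a _ _
            positivity
        _ ≤ 1 := hKraft
    -- conclude
    have h2pos : (0:ℝ) < (2 : ℝ) ^ (-(L x : ℤ)) := by positivity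
    have hGle : (G x : ℝ) ≤ (2 : ℝ) ^ (L x : ℕ) := by
      have hSle : (S.card : ℝ) ≤ (2 : ℝ) ^ (L x : ℕ) := by
        rw [← le_div_iff₀ h2pos] at hsum
        rw [zpow_neg, one_div, inv_inv, zpow_natCast] at hsum
        exact hsum
      exact le_trans (by exact_mod_cast hcard) hSle
    calc (G x : ℝ) ≤ (2 : ℝ) ^ (L x : ℕ) := hGle
      _ = (2 : ℝ) ^ (L x : ℝ) := by
        rw [← Real.rpow_natCast 2 (L x)]
  apply Finset.sum_le_sum
  intro x _
  apply mul_le_mul_of_nonneg_left _ (hP0 x)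
  rw [mul_comm, Real.rpow_mul (by norm_num : (0:ℝ) ≤ 2)]
  exact Real.rpow_le_rpow (Nat.cast_nonneg _) (key x) hρ.le
end
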